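/- Let $\{Y^{(k)}_n\}$ and $\{Y^{(k+1)}_n\}$ be the stationary second-order Markov chains of the construction, differing only in transitions following the two-step history $(t_{k+1}, k+1)$. For any $N$ and $\delta>0$, if $t_{k+1}$ is chosen so large that the stationary probability of the state $t_{k+1}$ under $\{Y^{(k)}_n\}$ is less than $\delta/(64+2N)$, then the total variation distance between the laws of $(Y^{(k)}_0,\dots,Y^{(k)}_N)$ and $(Y^{(k+1)}_0,\dots,Y^{(k+1)}_N)$ is at most $\delta$. -/

import Mathlib

/-!
Both chains are stationary of order two, so the law of a word factors through their kernels,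
which differ only in the row after the history `(t (k + 1), k + 1)`. Appending a letter to the
words therefore adds at most `2 π (t (k + 1), k + 1)` to the `ℓ¹` distance of their laws, where `π`
is the law of a pair of consecutive letters under `μ`. From every history the kernel of `ν` moves to
`0` with probability at least `1 / 4`, so two of its steps contract `ℓ¹` distances by the factor
`1 - 1 / 16` (Doeblin); comparing the invariant pair laws through this contraction bounds their
distance by `64 π (t (k + 1), k + 1)`. Altogether the laws of `N + 1` consecutive letters are within
`(64 + 2 N) π (t (k + 1), k + 1) ≤ (64 + 2 N) P(X₀ = t (k + 1))` of each other.
-/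

open MeasureTheory Filter Set
open scoped ENNReal

attribute [local instance] Classical.propDecidable

namespace MemoryEst

variable {Ω : Type*} [MeasurableSpace Ω] {𝒳 : Type*} [MeasurableSpace 𝒳]

/-- The word `w` (read left to right) occupies positions `l - w.length + 1, …, l`. -/
def wordEndsAt (X : ℤ → Ω → 𝒳) (l : ℤ) (w : List 𝒳) (ω : Ω) : Prop :=
  ∀ j : Fin w.length, X (l - (w.length : ℤ) + 1 + ((j : ℕ) : ℤ)) ω = w.get j

def cyl (X : ℤ → Ω → 𝒳) (l : ℤ) (w : List 𝒳) : Set Ω := {ω | wordEndsAt X l w ω}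

/-- `P(X_{-k+1}^0 = w)` where `k = w.length`. -/
noncomputable def wordProb (μ : Measure Ω) (X : ℤ → Ω → 𝒳) (w : List 𝒳) : ℝ :=
  (μ (cyl X 0 w)).toReal

/-- `p(x | w) = P(X_1 = x | X_{-k+1}^0 = w)`. -/
noncomputable def condProb (μ : Measure Ω) (X : ℤ → Ω → 𝒳) (x : 𝒳) (w : List 𝒳) : ℝ :=
  (μ (cyl X 0 w ∩ {ω | X 1 ω = x})).toReal / wordProb μ X w

def IsStationary (μ : Measure Ω) (X : ℤ → Ω → 𝒳) : Prop :=
  ∀ (l : ℤ) (w : List 𝒳), μ (cyl X l w) = μ (cyl X 0 w)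

/-- `w` is a memory word: it has positive probability and the conditional law of the
next symbol does not change under any left extension of positive probability. -/
def IsMemoryWord (μ : Measure Ω) (X : ℤ → Ω → 𝒳) (w : List 𝒳) : Prop :=
  0 < wordProb μ X w ∧
    ∀ (z : List 𝒳) (y : 𝒳), z ≠ [] → 0 < wordProb μ X (z ++ w ++ [y]) →
      condProb μ X y w = condProb μ X y (z ++ w)

/-- The word `(X_{l-k+1}, …, X_l)`. -/
def pastWord (X : ℤ → Ω → 𝒳) (l : ℤ) (k : ℕ) (ω : Ω) : List 𝒳 :=
  (List.range k).map fun j => X (l - (k : ℤ) + 1 + (j : ℤ)) ω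

/-- `K(X_{-∞}^l)`: least `k` such that `X_{l-k+1}^l` is a memory word (`sInf ∅ = 0`). -/
noncomputable def memoryLenNat (μ : Measure Ω) (X : ℤ → Ω → 𝒳) (l : ℤ) (ω : Ω) : ℕ :=
  sInf {k : ℕ | IsMemoryWord μ X (pastWord X l k ω)}

def FinitarilyMarkovian (μ : Measure Ω) (X : ℤ → Ω → 𝒳) : Prop :=
  ∀ᵐ ω ∂μ, ∃ k : ℕ, IsMemoryWord μ X (pastWord X 0 k ω)

/-- Number of positions `l ∈ [a,b]` at which the word `w` ends. -/
noncomputable def countOcc (X : ℤ → Ω → 𝒳) (a b : ℤ) (w : List 𝒳) (ω : Ω) : ℕ :=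
  ((Finset.Icc a b).filter fun l => wordEndsAt X l w ω).card

/-- Empirical conditional probability `p̂_n(x|w)` from the data segment `X_{-n}^0`. -/
noncomputable def empP (X : ℤ → Ω → 𝒳) (n : ℕ) (x : 𝒳) (w : List 𝒳) (ω : Ω) : ℝ :=
  (countOcc X (-(n : ℤ) + w.length) 0 (w ++ [x]) ω : ℝ) /
    (countOcc X (-(n : ℤ) + w.length - 1) (-1) w ω : ℝ)

/-- `w ∈ 𝓛ⁿ_{w.length}`: the word `w` appears more than `n^{1-γ}` times in `X_{-n}^0`. -/
def memLong (γ : ℝ) (X : ℤ → Ω → 𝒳) (n : ℕ) (w : List 𝒳) (ω : Ω) : Prop :=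
  (n : ℝ) ^ (1 - γ) < (countOcc X (-(n : ℤ) + w.length - 1) 0 w ω : ℝ)

/-- Empirical discrepancy `Δ̂ⁿ_k(w)` (with `sSup ∅ = 0`). -/
noncomputable def empDelta (γ : ℝ) (X : ℤ → Ω → 𝒳) (n : ℕ) (w : List 𝒳) (ω : Ω) : ℝ :=
  sSup {d : ℝ | ∃ (z : List 𝒳) (x : 𝒳), 1 ≤ z.length ∧ z.length ≤ n ∧
    memLong γ X n (z ++ w ++ [x]) ω ∧
    d = |empP X n x w ω - empP X n x (z ++ w) ω|}

/-- The discrepancy `Δ_k(w)` measuring failure of `w` to be a memory word. -/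
noncomputable def Delta (μ : Measure Ω) (X : ℤ → Ω → 𝒳) (w : List 𝒳) : ℝ :=
  sSup {d : ℝ | ∃ (z : List 𝒳) (x : 𝒳), z ≠ [] ∧ 0 < wordProb μ X (z ++ w ++ [x]) ∧
    d = |condProb μ X x w - condProb μ X x (z ++ w)|}

def NTEST (γ β : ℝ) (X : ℤ → Ω → 𝒳) (n : ℕ) (w : List 𝒳) (ω : Ω) : Prop :=
  empDelta γ X n w ω ≤ (n : ℝ) ^ (-β)

/-- Forward recurrence times `λ⁺_{l,k,i}` of the word occupying `(l-k, l]`. -/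
noncomputable def lamPos (X : ℤ → Ω → 𝒳) (l : ℤ) (k : ℕ) (ω : Ω) : ℕ → ℕ
  | 0 => 0
  | i + 1 =>
    lamPos X l k ω i +
      sInf {t : ℕ | 0 < t ∧ ∀ j : Fin k,
        X (l + (lamPos X l k ω i : ℤ) + (t : ℤ) - ((j : ℕ) : ℤ)) ω =
          X (l + (lamPos X l k ω i : ℤ) - ((j : ℕ) : ℤ)) ω}

/-- Backward recurrence times `λ⁻_{l,k,i}` of the word occupying `(l-k, l]`. -/
noncomputable def lamNeg (X : ℤ → Ω → 𝒳) (l : ℤ) (k : ℕ) (ω : Ω) : ℕ → ℕ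
  | 0 => 0
  | i + 1 =>
    lamNeg X l k ω i +
      sInf {t : ℕ | 0 < t ∧ ∀ j : Fin k,
        X (l - (lamNeg X l k ω i : ℤ) - (t : ℤ) - ((j : ℕ) : ℤ)) ω =
          X (l - (lamNeg X l k ω i : ℤ) - ((j : ℕ) : ℤ)) ω}

/-- The left shift on two-sided path space. -/
def shift (𝒳 : Type*) : (ℤ → 𝒳) → (ℤ → 𝒳) := fun ω n => ω (n + 1)

/-- The canonical process on path space. -/
def proc (𝒳 : Type*) : ℤ → (ℤ → 𝒳) → 𝒳 := fun n ω => ω n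

/-- First order Markov property for the canonical process. -/
def MarkovOrderOne {S : Type*} [MeasurableSpace S] (μ : Measure (ℤ → S)) : Prop :=
  ∀ (w : List S) (a y : S), 0 < wordProb μ (proc S) (w ++ [a]) →
    condProb μ (proc S) y (w ++ [a]) = condProb μ (proc S) y [a]

/-- Markov chain of order `L`: every positive-probability word of length `L` is a memory word. -/
def MarkovOfOrder {S : Type*} [MeasurableSpace S] (μ : Measure (ℤ → S)) (L : ℕ) : Prop :=
  ∀ w : List S, w.length = L → 0 < wordProb μ (proc S) w → IsMemoryWord μ (proc S) w

/-- The forward recurrence times `ζ_n(i)` of the left-extension reconstruction scheme. -/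
noncomputable def zeta (X : ℤ → Ω → 𝒳) (i : ℕ) (ω : Ω) : ℕ → ℕ
  | 0 => 0
  | n + 1 =>
    zeta X i ω n +
      sInf {t : ℕ | 0 < t ∧ ∀ j : Fin (n + 1),
        X ((i : ℤ) + (zeta X i ω n : ℤ) - (n : ℤ) + ((j : ℕ) : ℤ) + (t : ℤ)) ω =
          X ((i : ℤ) + (zeta X i ω n : ℤ) - (n : ℤ) + ((j : ℕ) : ℤ)) ω}

/-- The reconstructed past `X̃_{-n}(i)`. -/
noncomputable def tildeX (X : ℤ → Ω → 𝒳) (i : ℕ) (n : ℕ) (ω : Ω) : 𝒳 :=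
  X ((i : ℤ) + (zeta X i ω n : ℤ) - (n : ℤ)) ω

/-- The backward recurrence times `ζ̂ᵏ_i`. -/
noncomputable def hatZeta (X : ℤ → Ω → 𝒳) (k : ℕ) (ω : Ω) : ℕ → ℤ
  | 0 => 0
  | i + 1 =>
    hatZeta X k ω i -
      sInf {t : ℕ | 0 < t ∧ ∀ j : Fin (k - i),
        X (hatZeta X k ω i - ((k - i - 1 : ℕ) : ℤ) + ((j : ℕ) : ℤ) - (t : ℤ)) ω =
          X (hatZeta X k ω i - ((k - i - 1 : ℕ) : ℤ) + ((j : ℕ) : ℤ)) ω}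

/-- The transition matrix of the chain `Z` on the nonnegative integers. -/
noncomputable def Ptrans (s j : ℕ) : ℝ :=
  if s < j then (2 : ℝ) ^ (-((j : ℤ) - (s : ℤ)) - 1)
  else if j = s then (2 : ℝ) ^ (-(s : ℤ) - 1)
  else (2 : ℝ) ^ (-(j : ℤ) - 2)

/-- The backward memory-length estimator `χ_n`. -/
noncomputable def chiEst (γ β : ℝ) (X : ℤ → Ω → 𝒳) (n : ℕ) (ω : Ω) : ℕ :=
  if ∃ k, k < n ∧ NTEST γ β X n (pastWord X 0 k ω) ω then
    sInf {k : ℕ | k < n ∧ NTEST γ β X n (pastWord X 0 k ω) ω}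
  else n

section AbsDiff

variable {ι : Type*}

def absDiff (a b : ℝ≥0∞) : ℝ≥0∞ := (a - b) + (b - a)

@[simp] lemma absDiff_self (a : ℝ≥0∞) : absDiff a a = 0 := by simp [absDiff]

lemma absDiff_le_add (a b : ℝ≥0∞) : absDiff a b ≤ a + b :=
  add_le_add tsub_le_self tsub_le_self

lemma absDiff_triangle (a b c : ℝ≥0∞) : absDiff a c ≤ absDiff a b + absDiff b c := by
  have h₁ : a - c ≤ (a - b) + (b - c) := tsub_le_tsub_add_tsub
  have h₂ : c - a ≤ (c - b) + (b - a) := tsub_le_tsub_add_tsub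
  calc absDiff a c ≤ ((a - b) + (b - c)) + ((c - b) + (b - a)) := add_le_add h₁ h₂
    _ = absDiff a b + absDiff b c := by unfold absDiff; ring

lemma absDiff_add_left {c : ℝ≥0∞} (hc : c ≠ ∞) (a b : ℝ≥0∞) :
    absDiff (c + a) (c + b) = absDiff a b := by
  simp only [absDiff, ENNReal.add_sub_add_eq_sub_left hc]

lemma absDiff_mul_le (x y α β : ℝ≥0∞) :
    absDiff (x * α) (y * β) ≤ absDiff x y * β + x * absDiff α β := by
  have h₁ : x * α - y * β ≤ x * (α - β) + (x - y) * β := by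
    rw [tsub_le_iff_right]
    calc x * α ≤ x * ((α - β) + β) := by gcongr; exact le_tsub_add
      _ ≤ x * (α - β) + ((x - y) + y) * β := by rw [mul_add]; gcongr; exact le_tsub_add
      _ = x * (α - β) + (x - y) * β + y * β := by ring
  have h₂ : y * β - x * α ≤ (y - x) * β + x * (β - α) := by
    rw [tsub_le_iff_right]
    calc y * β ≤ ((y - x) + x) * β := by gcongr; exact le_tsub_add
      _ ≤ (y - x) * β + x * ((β - α) + α) := by rw [add_mul]; gcongr; exact le_tsub_add
      _ = (y - x) * β + x * (β - α) + x * α := by ring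
  calc absDiff (x * α) (y * β)
      ≤ (x * (α - β) + (x - y) * β) + ((y - x) * β + x * (β - α)) := add_le_add h₁ h₂
    _ = absDiff x y * β + x * absDiff α β := by unfold absDiff; ring

lemma absDiff_tsum_le (f g : ι → ℝ≥0∞) :
    absDiff (∑' i, f i) (∑' i, g i) ≤ ∑' i, absDiff (f i) (g i) := by
  have key : ∀ f g : ι → ℝ≥0∞, ∑' i, f i - ∑' i, g i ≤ ∑' i, (f i - g i) := fun f g => by
    rw [tsub_le_iff_right, ← ENNReal.tsum_add]
    exact ENNReal.tsum_le_tsum fun i => le_tsub_add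
  simpa only [absDiff, ENNReal.tsum_add] using add_le_add (key f g) (key g f)

lemma absDiff_add_two_mul_min (a b : ℝ≥0∞) : absDiff a b + 2 * min a b = a + b := by
  rcases le_total a b with h | h
  · rw [absDiff, tsub_eq_zero_of_le h, min_eq_left h, zero_add, two_mul, ← add_assoc,
      tsub_add_cancel_of_le h, add_comm]
  · rw [absDiff, tsub_eq_zero_of_le h, min_eq_right h, add_zero, two_mul, ← add_assoc,
      tsub_add_cancel_of_le h]

lemma abs_toReal_sub_toReal_le {a b : ℝ≥0∞} (ha : a ≠ ∞) (hb : b ≠ ∞) :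
    |a.toReal - b.toReal| ≤ (absDiff a b).toReal := by
  rcases le_total a b with h | h
  · rw [absDiff, tsub_eq_zero_of_le h, zero_add, ENNReal.toReal_sub_of_le h hb, abs_sub_comm,
      abs_of_nonneg (sub_nonneg.2 (ENNReal.toReal_mono hb h))]
  · rw [absDiff, tsub_eq_zero_of_le h, add_zero, ENNReal.toReal_sub_of_le h ha,
      abs_of_nonneg (sub_nonneg.2 (ENNReal.toReal_mono ha h))]

noncomputable def l1Dist (u v : ι → ℝ≥0∞) : ℝ≥0∞ := ∑' i, absDiff (u i) (v i)

lemma l1Dist_triangle (u v w : ι → ℝ≥0∞) : l1Dist u w ≤ l1Dist u v + l1Dist v w := by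
  rw [l1Dist, l1Dist, l1Dist, ← ENNReal.tsum_add]
  exact ENNReal.tsum_le_tsum fun i => absDiff_triangle _ _ _

lemma l1Dist_le_tsum_add_tsum (u v : ι → ℝ≥0∞) : l1Dist u v ≤ ∑' i, u i + ∑' i, v i := by
  rw [l1Dist, ← ENNReal.tsum_add]
  exact ENNReal.tsum_le_tsum fun i => absDiff_le_add _ _

lemma l1Dist_add_left {w : ι → ℝ≥0∞} (hw : ∀ i, w i ≠ ∞) (u v : ι → ℝ≥0∞) :
    l1Dist (w + u) (w + v) = l1Dist u v := by
  simp only [l1Dist, Pi.add_apply, absDiff_add_left (hw _)]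

lemma l1Dist_add_two_mul_le_of_le_min {u v : ι → ℝ≥0∞} {c : ℝ≥0∞} (i : ι)
    (hu : c ≤ u i) (hv : c ≤ v i) : l1Dist u v + 2 * c ≤ ∑' i, u i + ∑' i, v i := by
  calc l1Dist u v + 2 * c ≤ l1Dist u v + 2 * ∑' j, min (u j) (v j) := by
        gcongr
        exact (le_min hu hv).trans (ENNReal.le_tsum i)
    _ = ∑' i, u i + ∑' i, v i := by
        rw [l1Dist, ← ENNReal.tsum_mul_left, ← ENNReal.tsum_add, ← ENNReal.tsum_add]
        exact tsum_congr fun j => absDiff_add_two_mul_min _ _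

lemma absDiff_measure_le_l1Dist {X : Type*} [MeasurableSpace X] [Countable X]
    [MeasurableSingletonClass X] (μ ν : Measure X) (A : Set X) :
    absDiff (μ A) (ν A) ≤ l1Dist (fun x => μ {x}) (fun x => ν {x}) := by
  rw [← Measure.tsum_indicator_apply_singleton μ A A.to_countable.measurableSet,
    ← Measure.tsum_indicator_apply_singleton ν A A.to_countable.measurableSet]
  refine (absDiff_tsum_le _ _).trans (ENNReal.tsum_le_tsum fun x => ?_)
  by_cases hx : x ∈ A <;> simp [hx]

lemma eq_of_le_of_tsum_le {f g : ι → ℝ≥0∞} (h : ∀ i, f i ≤ g i) (hg : ∑' i, g i ≠ ∞)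
    (hsum : ∑' i, g i ≤ ∑' i, f i) (i : ι) : f i = g i := by
  by_contra hne
  exact (ENNReal.tsum_lt_tsum (ne_top_of_le_ne_top hg (ENNReal.tsum_le_tsum h)) h
    ((h i).lt_of_ne hne)).not_ge hsum

end AbsDiff

section PairStep

variable {S : Type*}

/-- One step of a second-order chain with kernel `K`, acting on laws of consecutive pairs. -/
noncomputable def pairStep (K : S × S → S → ℝ≥0∞) (g : S × S → ℝ≥0∞) : S × S → ℝ≥0∞ :=
  fun p => ∑' a, g (a, p.1) * K (a, p.1) p.2

lemma tsum_tsum_pair_comm (f : S → S → S → ℝ≥0∞) :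
    ∑' p : S × S, ∑' a, f a p.1 p.2 = ∑' p : S × S, ∑' c, f p.1 p.2 c := by
  rw [ENNReal.tsum_prod', ENNReal.tsum_prod']
  calc ∑' (b) (c) (a), f a b c = ∑' (b) (a) (c), f a b c := by
        congr 1; funext b; exact ENNReal.tsum_comm
    _ = ∑' (a) (b) (c), f a b c := ENNReal.tsum_comm

lemma pairStep_add (K : S × S → S → ℝ≥0∞) (u v : S × S → ℝ≥0∞) :
    pairStep K (u + v) = pairStep K u + pairStep K v := by
  funext p
  simp only [pairStep, Pi.add_apply, add_mul, ENNReal.tsum_add]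

variable {K : S × S → S → ℝ≥0∞}

lemma tsum_pairStep (hK : ∀ p, ∑' c, K p c = 1) (g : S × S → ℝ≥0∞) :
    ∑' p, pairStep K g p = ∑' p, g p := by
  simp only [pairStep]
  rw [tsum_tsum_pair_comm (fun a b c => g (a, b) * K (a, b) c)]
  simp [ENNReal.tsum_mul_left, hK]

lemma l1Dist_pairStep_le (hK : ∀ p, ∑' c, K p c = 1) (u v : S × S → ℝ≥0∞) :
    l1Dist (pairStep K u) (pairStep K v) ≤ l1Dist u v := by
  calc l1Dist (pairStep K u) (pairStep K v)
      ≤ ∑' p, pairStep K (fun q => absDiff (u q) (v q)) p := by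
        refine ENNReal.tsum_le_tsum fun p => (absDiff_tsum_le _ _).trans ?_
        refine ENNReal.tsum_le_tsum fun a => (absDiff_mul_le _ _ _ _).trans ?_
        simp
    _ = l1Dist u v := tsum_pairStep hK _

lemma l1Dist_pairStep_le_tsum_mul_l1Dist (K₁ K₂ : S × S → S → ℝ≥0∞) (π : S × S → ℝ≥0∞) :
    l1Dist (pairStep K₁ π) (pairStep K₂ π) ≤ ∑' p, π p * l1Dist (K₁ p) (K₂ p) := by
  calc l1Dist (pairStep K₁ π) (pairStep K₂ π)
      ≤ ∑' p : S × S, ∑' a, π (a, p.1) * absDiff (K₁ (a, p.1) p.2) (K₂ (a, p.1) p.2) := by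
        refine ENNReal.tsum_le_tsum fun p => (absDiff_tsum_le _ _).trans ?_
        refine ENNReal.tsum_le_tsum fun a => (absDiff_mul_le _ _ _ _).trans ?_
        simp
    _ = ∑' p, π p * l1Dist (K₁ p) (K₂ p) := by
        rw [tsum_tsum_pair_comm (fun a b c => π (a, b) * absDiff (K₁ (a, b) c) (K₂ (a, b) c))]
        simp [l1Dist, ENNReal.tsum_mul_left]

lemma mul_tsum_le_pairStep {ε : ℝ≥0∞} {s₀ : S} (hmin : ∀ p, ε ≤ K p s₀)
    (g : S × S → ℝ≥0∞) (b : S) : ε * ∑' a, g (a, b) ≤ pairStep K g (b, s₀) := by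
  rw [← ENNReal.tsum_mul_left]
  exact ENNReal.tsum_le_tsum fun a => by rw [mul_comm]; gcongr; exact hmin _

lemma sq_mul_tsum_le_pairStep_pairStep {ε : ℝ≥0∞} {s₀ : S} (hmin : ∀ p, ε ≤ K p s₀)
    (g : S × S → ℝ≥0∞) : ε ^ 2 * ∑' p, g p ≤ pairStep K (pairStep K g) (s₀, s₀) := by
  calc ε ^ 2 * ∑' p, g p = ε * ∑' b, ε * ∑' a, g (a, b) := by
        rw [ENNReal.tsum_prod', ENNReal.tsum_comm, ENNReal.tsum_mul_left, sq, mul_assoc]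
    _ ≤ ε * ∑' b, pairStep K g (b, s₀) := by
        gcongr with b; exact mul_tsum_le_pairStep hmin g b
    _ ≤ pairStep K (pairStep K g) (s₀, s₀) := mul_tsum_le_pairStep hmin _ s₀

/-- Doeblin's contraction `d (T² u) (T² v) ≤ (1 - ε ^ 2) d u v`, stated without subtraction. -/
lemma l1Dist_pairStep_pairStep_add_sq_mul_le {ε : ℝ≥0∞} {s₀ : S} (hK : ∀ p, ∑' c, K p c = 1)
    (hmin : ∀ p, ε ≤ K p s₀) {u v : S × S → ℝ≥0∞} (hmass : ∑' p, u p = ∑' p, v p)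
    (hfin : ∑' p, u p ≠ ∞) :
    l1Dist (pairStep K (pairStep K u)) (pairStep K (pairStep K v)) + ε ^ 2 * l1Dist u v ≤
      l1Dist u v := by
  set T := fun g => pairStep K (pairStep K g)
  have hT_add : ∀ g h, T (g + h) = T g + T h := fun g h => by
    simp only [T, pairStep_add]
  have hT_mass : ∀ g, ∑' p, T g p = ∑' p, g p := fun g => by
    simp only [T, tsum_pairStep hK]
  -- `u` and `v` share the common part `m`; only the rests `u - v` and `v - u` matter.
  set m : S × S → ℝ≥0∞ := fun p => min (u p) (v p)
  have hu : u = m + (u - v) := funext fun p => by simp [m, add_comm, tsub_add_min]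
  have hv : v = m + (v - u) := funext fun p => by
    simp only [m, Pi.add_apply, Pi.sub_apply]; rw [min_comm, add_comm, tsub_add_min]
  have hm_fin : ∑' p, m p ≠ ∞ :=
    ne_top_of_le_ne_top hfin (ENNReal.tsum_le_tsum fun p => min_le_left _ _)
  have hTm_fin : ∀ p, T m p ≠ ∞ := fun p =>
    ne_top_of_le_ne_top (hT_mass m ▸ hm_fin) (ENNReal.le_tsum p)
  set s := ∑' p, (u - v) p
  have hs : ∑' p, (v - u) p = s := by
    have hu' : ∑' p, u p = ∑' p, m p + s := by
      conv_lhs => rw [hu]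
      exact ENNReal.tsum_add
    have hv' : ∑' p, v p = ∑' p, m p + ∑' p, (v - u) p := by
      conv_lhs => rw [hv]
      exact ENNReal.tsum_add
    exact (ENNReal.add_right_inj hm_fin).1 (hv'.symm.trans (hmass ▸ hu'))
  have hd : l1Dist u v = s + s := by
    calc l1Dist u v = s + ∑' p, (v - u) p := ENNReal.tsum_add
      _ = s + s := by rw [hs]
  have hdT : l1Dist (T u) (T v) = l1Dist (T (u - v)) (T (v - u)) := by
    calc l1Dist (T u) (T v) = l1Dist (T m + T (u - v)) (T m + T (v - u)) := by
          rw [← hT_add, ← hT_add, ← hu, ← hv]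
      _ = l1Dist (T (u - v)) (T (v - u)) := l1Dist_add_left hTm_fin _ _
  have hkey : l1Dist (T (u - v)) (T (v - u)) + 2 * (ε ^ 2 * s) ≤ s + s := by
    have h := l1Dist_add_two_mul_le_of_le_min (s₀, s₀)
      (sq_mul_tsum_le_pairStep_pairStep hmin (u - v))
      (hs ▸ sq_mul_tsum_le_pairStep_pairStep hmin (v - u))
    rwa [hT_mass, hT_mass, hs] at h
  calc l1Dist (T u) (T v) + ε ^ 2 * l1Dist u v
      = l1Dist (T (u - v)) (T (v - u)) + 2 * (ε ^ 2 * s) := by rw [hdT, hd]; ring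
    _ ≤ l1Dist u v := hd ▸ hkey

variable {K₁ K₂ : S × S → S → ℝ≥0∞}

lemma tsum_mul_l1Dist_le (hK₁ : ∀ p, ∑' c, K₁ p c = 1) (hK₂ : ∀ p, ∑' c, K₂ p c = 1)
    {star : S × S} (hagree : ∀ p ≠ star, K₁ p = K₂ p) (π : S × S → ℝ≥0∞) :
    ∑' p, π p * l1Dist (K₁ p) (K₂ p) ≤ 2 * π star := by
  rw [tsum_eq_single star fun p hp => by simp [hagree p hp, l1Dist], mul_comm]
  gcongr
  simpa [hK₁, hK₂, one_add_one_eq_two] using l1Dist_le_tsum_add_tsum (K₁ star) (K₂ star)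

/-- Compare `π₁` with `π₂` through `T π₁` and `T (T π₁)`, where `T` is the step of `K₂`: the first
two comparisons cost the perturbation, the last one contracts. -/
lemma sq_mul_l1Dist_le_of_pairStep_eq {ε : ℝ≥0∞} {s₀ : S} (hK₂ : ∀ p, ∑' c, K₂ p c = 1)
    (hmin : ∀ p, ε ≤ K₂ p s₀) {π₁ π₂ : S × S → ℝ≥0∞} (hπ₁ : pairStep K₁ π₁ = π₁)
    (hπ₂ : pairStep K₂ π₂ = π₂) (hmass : ∑' p, π₁ p = ∑' p, π₂ p) (hfin : ∑' p, π₁ p ≠ ∞) :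
    ε ^ 2 * l1Dist π₁ π₂ ≤ 2 * ∑' p, π₁ p * l1Dist (K₁ p) (K₂ p) := by
  set W := ∑' p, π₁ p * l1Dist (K₁ p) (K₂ p)
  set T := pairStep K₂
  have h₁ : l1Dist π₁ (T π₁) ≤ W :=
    calc l1Dist π₁ (T π₁) = l1Dist (pairStep K₁ π₁) (T π₁) := by rw [hπ₁]
      _ ≤ W := l1Dist_pairStep_le_tsum_mul_l1Dist _ _ _
  have h₂ : l1Dist (T π₁) (T (T π₁)) ≤ W := (l1Dist_pairStep_le hK₂ _ _).trans h₁
  have h₃ : l1Dist (T (T π₁)) π₂ + ε ^ 2 * l1Dist π₁ π₂ ≤ l1Dist π₁ π₂ := by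
    simpa only [T, hπ₂] using l1Dist_pairStep_pairStep_add_sq_mul_le hK₂ hmin hmass hfin
  have hd_fin : l1Dist π₁ π₂ ≠ ∞ :=
    ne_top_of_le_ne_top (by rw [← hmass]; exact ENNReal.add_ne_top.2 ⟨hfin, hfin⟩)
      (l1Dist_le_tsum_add_tsum _ _)
  refine (ENNReal.add_le_add_iff_left hd_fin).1 ?_
  calc l1Dist π₁ π₂ + ε ^ 2 * l1Dist π₁ π₂
      ≤ (l1Dist π₁ (T π₁) + l1Dist (T π₁) (T (T π₁)) + l1Dist (T (T π₁)) π₂) +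
          ε ^ 2 * l1Dist π₁ π₂ := by
        gcongr
        exact (l1Dist_triangle _ (T (T π₁)) _).trans (add_le_add (l1Dist_triangle _ _ _) le_rfl)
    _ ≤ (W + W) + (l1Dist (T (T π₁)) π₂ + ε ^ 2 * l1Dist π₁ π₂) := by
        rw [add_assoc _ (l1Dist (T (T π₁)) π₂)]; gcongr
    _ ≤ l1Dist π₁ π₂ + 2 * W := by rw [two_mul, add_comm]; gcongr

end PairStep

section Cylinders

variable {S : Type*}

lemma mem_cyl_iff {l : ℤ} {w : List S} {ω : ℤ → S} :
    ω ∈ cyl (proc S) l w ↔ ∀ i < w.length, w[i]? = some (ω (l - w.length + 1 + i)) := by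
  refine ⟨fun h i hi => ?_, fun h j => ?_⟩
  · rw [List.getElem?_eq_getElem hi]; exact congrArg some (h ⟨i, hi⟩).symm
  · have := h j j.isLt
    rw [List.getElem?_eq_getElem j.isLt, Option.some_inj] at this
    exact this.symm

lemma cyl_append_singleton (l : ℤ) (w : List S) (y : S) :
    cyl (proc S) l (w ++ [y]) = cyl (proc S) (l - 1) w ∩ {ω | ω l = y} := by
  ext ω
  simp +contextual only [mem_cyl_iff, Set.mem_inter_iff, Set.mem_ofPred_eq, List.length_append,
    List.length_singleton, Nat.forall_lt_succ_right, List.getElem?_append_left,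
    List.getElem?_concat_length, Option.some_inj]
  push_cast
  ring_nf
  exact and_congr_right fun _ => eq_comm

lemma cyl_cons (l : ℤ) (a : S) (w : List S) :
    cyl (proc S) l (a :: w) = cyl (proc S) l w ∩ {ω | ω (l - w.length) = a} := by
  ext ω
  simp only [mem_cyl_iff, Set.mem_inter_iff, Set.mem_ofPred_eq, List.length_cons,
    Nat.forall_lt_succ_left, List.getElem?_cons_zero, List.getElem?_cons_succ, Option.some_inj]
  push_cast
  ring_nf
  exact and_comm.trans (and_congr_right fun _ => eq_comm)

@[simp] lemma cyl_nil (l : ℤ) : cyl (proc S) l ([] : List S) = univ := by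
  ext ω; simp [mem_cyl_iff]

lemma cyl_singleton (l : ℤ) (a : S) : cyl (proc S) l [a] = {ω | ω l = a} := by
  simpa using cyl_append_singleton l [] a

lemma cyl_append_subset (l : ℤ) (z w : List S) : cyl (proc S) l (z ++ w) ⊆ cyl (proc S) l w := by
  induction z with
  | nil => simp
  | cons a z ih => rw [List.cons_append, cyl_cons]; exact inter_subset_left.trans ih

lemma preimage_shift_cyl (l : ℤ) (w : List S) :
    shift S ⁻¹' cyl (proc S) l w = cyl (proc S) (l + 1) w := by
  ext ω
  simp only [mem_preimage, mem_cyl_iff, shift]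
  ring_nf

lemma preimage_coords_singleton (N : ℕ) (f : Fin (N + 1) → S) :
    (fun ω : ℤ → S => fun m : Fin (N + 1) => ω ((m : ℕ) : ℤ)) ⁻¹' {f} =
      cyl (proc S) N (List.ofFn f) := by
  ext ω
  simp only [mem_preimage, mem_singleton_iff, funext_iff, mem_cyl_iff, List.length_ofFn,
    List.getElem?_ofFn, Fin.forall_iff]
  refine forall₂_congr fun i hi => ?_
  rw [dif_pos hi, Option.some_inj, eq_comm,
    show (N : ℤ) - (N + 1 : ℕ) + 1 + i = i by push_cast; ring]

variable [MeasurableSpace S]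

lemma measurableSet_cyl [MeasurableSingletonClass S] (l : ℤ) (w : List S) :
    MeasurableSet (cyl (proc S) l w) := by
  have : cyl (proc S) l w = ⋂ j : Fin w.length,
      (fun ω : ℤ → S => ω (l - w.length + 1 + j)) ⁻¹' {w.get j} := by
    ext; simp [cyl, wordEndsAt, proc]
  rw [this]
  exact .iInter fun j => measurable_pi_apply _ (measurableSet_singleton _)

variable [MeasurableSingletonClass S] {μ : Measure (ℤ → S)}

lemma measure_cyl_of_measurePreserving (hμ : MeasurePreserving (shift S) μ μ) (l : ℤ)
    (w : List S) : μ (cyl (proc S) l w) = μ (cyl (proc S) 0 w) := by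
  induction l using Int.induction_on with
  | zero => rfl
  | succ n ih =>
    rw [← ih, ← preimage_shift_cyl, hμ.measure_preimage (measurableSet_cyl _ _).nullMeasurableSet]
  | pred n ih =>
    rw [← ih, ← sub_add_cancel (-(n : ℤ)) 1, ← preimage_shift_cyl,
      hμ.measure_preimage (measurableSet_cyl _ _).nullMeasurableSet, sub_add_cancel]

variable [Countable S]

lemma measure_eq_tsum_inter_coord {E : Set (ℤ → S)} (hE : MeasurableSet E) (i : ℤ) :
    μ E = ∑' a, μ (E ∩ {ω | ω i = a}) := by
  have hdisj : Pairwise fun a b : S => Disjoint (E ∩ {ω | ω i = a}) (E ∩ {ω | ω i = b}) :=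
    fun a b hab => disjoint_left.2 fun ω h₁ h₂ => hab (h₁.2.symm.trans h₂.2)
  have hmeas : ∀ a : S, MeasurableSet (E ∩ {ω | ω i = a}) := fun a =>
    hE.inter ((measurableSet_singleton a).preimage (measurable_pi_apply i))
  rw [← measure_iUnion hdisj hmeas, ← inter_iUnion,
    iUnion_eq_univ_iff.2 fun ω => ⟨ω i, rfl⟩, inter_univ]

lemma measure_cyl_eq_tsum_cons (l : ℤ) (w : List S) :
    μ (cyl (proc S) l w) = ∑' a, μ (cyl (proc S) l (a :: w)) := by
  simp only [cyl_cons]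
  exact measure_eq_tsum_inter_coord (measurableSet_cyl l w) _

lemma measure_cyl_eq_tsum_append (hμ : MeasurePreserving (shift S) μ μ) (w : List S) :
    μ (cyl (proc S) 0 w) = ∑' y, μ (cyl (proc S) 0 (w ++ [y])) := by
  rw [measure_eq_tsum_inter_coord (measurableSet_cyl 0 w) 1]
  refine tsum_congr fun y => ?_
  rw [← measure_cyl_of_measurePreserving hμ 1, cyl_append_singleton, sub_self]

lemma tsum_measure_cyl_ofFn_append (w : List S) :
    ∀ j, ∑' v : Fin j → S, μ (cyl (proc S) 0 (List.ofFn v ++ w)) = μ (cyl (proc S) 0 w)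
  | 0 => by simp
  | j + 1 => by
    rw [← (Fin.consEquiv fun _ => S).tsum_eq, ENNReal.tsum_prod', ENNReal.tsum_comm,
      ← tsum_measure_cyl_ofFn_append w j]
    refine tsum_congr fun v => ?_
    simp only [Fin.consEquiv, Equiv.coe_fn_mk, List.ofFn_cons, List.cons_append]
    exact (measure_cyl_eq_tsum_cons 0 _).symm

end Cylinders

section PairChain

variable {S : Type*} [MeasurableSpace S] [MeasurableSingletonClass S]
  {μ : Measure (ℤ → S)} {K : S × S → S → ℝ≥0∞}

def HasPairKernel (μ : Measure (ℤ → S)) (K : S × S → S → ℝ≥0∞) : Prop :=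
  ∀ (z : List S) (a b y : S),
    μ (cyl (proc S) 0 (z ++ [a, b] ++ [y])) = μ (cyl (proc S) 0 (z ++ [a, b])) * K (a, b) y

lemma condProb_eq_div (hμ : MeasurePreserving (shift S) μ μ) (u : S) (w : List S) :
    condProb μ (proc S) u w =
      (μ (cyl (proc S) 0 (w ++ [u]))).toReal / (μ (cyl (proc S) 0 w)).toReal := by
  rw [condProb, wordProb, ← measure_cyl_of_measurePreserving hμ 1 (w ++ [u]),
    cyl_append_singleton, sub_self]
  rfl

noncomputable def pairLaw (μ : Measure (ℤ → S)) (p : S × S) : ℝ≥0∞ :=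
  μ (cyl (proc S) 0 [p.1, p.2])

lemma pairLaw_le_measure (hμ : MeasurePreserving (shift S) μ μ) (a b : S) :
    pairLaw μ (a, b) ≤ μ {ω | ω 0 = a} :=
  calc pairLaw μ (a, b) = μ (cyl (proc S) 0 ([a] ++ [b])) := rfl
    _ ≤ μ (cyl (proc S) (0 - 1) [a]) :=
        measure_mono (by rw [cyl_append_singleton]; exact inter_subset_left)
    _ = μ {ω | ω 0 = a} := by rw [measure_cyl_of_measurePreserving hμ, cyl_singleton]

variable [Countable S]

lemma hasPairKernel_of_condProb [IsFiniteMeasure μ] (hμ : MeasurePreserving (shift S) μ μ)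
    (hmk : MarkovOfOrder μ 2) (hK : ∀ p, ∑' c, K p c = 1)
    (htr : ∀ a b u, 0 < wordProb μ (proc S) [a, b] →
      condProb μ (proc S) u [a, b] = (K (a, b) u).toReal) :
    HasPairKernel μ K := by
  intro z a b y
  set w := z ++ [a, b]
  have hK_fin : ∀ c, K (a, b) c ≠ ∞ := fun c =>
    ne_top_of_le_ne_top (hK (a, b) ▸ ENNReal.one_ne_top) (ENNReal.le_tsum c)
  have hmass : μ (cyl (proc S) 0 w) = ∑' u, μ (cyl (proc S) 0 w) * K (a, b) u := by
    rw [ENNReal.tsum_mul_left, hK, mul_one]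
  -- Where `w ++ [u]` is charged, the Markov property gives the ratio `K (a, b) u`; as both sides
  -- have total mass `μ w`, equality then holds everywhere.
  have hle : ∀ u, μ (cyl (proc S) 0 (w ++ [u])) ≤ μ (cyl (proc S) 0 w) * K (a, b) u := by
    intro u
    rcases eq_or_ne (μ (cyl (proc S) 0 (w ++ [u]))) 0 with h0 | h0
    · simp [h0]
    have hw : μ (cyl (proc S) 0 w) ≠ 0 := ne_bot_of_le_ne_bot h0 <| by
      rw [measure_cyl_eq_tsum_append hμ w]; exact ENNReal.le_tsum u
    have hab : 0 < wordProb μ (proc S) [a, b] := ENNReal.toReal_pos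
      (ne_bot_of_le_ne_bot hw (measure_mono (cyl_append_subset 0 z [a, b]))) (measure_ne_top _ _)
    have hcond : condProb μ (proc S) u w = (K (a, b) u).toReal := by
      rcases eq_or_ne z [] with rfl | hz
      · exact htr a b u hab
      · rw [← (hmk [a, b] rfl hab).2 z u hz (ENNReal.toReal_pos h0 (measure_ne_top _ _))]
        exact htr a b u hab
    rw [condProb_eq_div hμ, div_eq_iff (ENNReal.toReal_pos hw (measure_ne_top _ _)).ne', mul_comm,
      ← ENNReal.toReal_mul] at hcond
    exact ((ENNReal.toReal_eq_toReal_iff' (measure_ne_top _ _)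
      (ENNReal.mul_ne_top (measure_ne_top _ _) (hK_fin u))).1 hcond).le
  exact eq_of_le_of_tsum_le hle (hmass ▸ measure_ne_top _ _)
    (by rw [← hmass, ← measure_cyl_eq_tsum_append hμ]) y

lemma tsum_pairLaw [IsProbabilityMeasure μ] : ∑' p, pairLaw μ p = 1 := by
  rw [ENNReal.tsum_prod', ENNReal.tsum_comm]
  simp only [pairLaw, ← measure_cyl_eq_tsum_cons, cyl_nil, measure_univ]

lemma pairStep_pairLaw (h : HasPairKernel μ K) : pairStep K (pairLaw μ) = pairLaw μ := by
  funext ⟨b, c⟩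
  have hstep : ∀ a, μ (cyl (proc S) 0 [a, b]) * K (a, b) c = μ (cyl (proc S) 0 [a, b, c]) :=
    fun a => (h [] a b c).symm
  simp only [pairStep, pairLaw, hstep]
  exact (measure_cyl_eq_tsum_cons 0 [b, c]).symm

end PairChain

section Blocks

variable {S : Type*}

lemma ofFn_snoc {j : ℕ} (v : Fin j → S) (a : S) :
    List.ofFn (Fin.snoc (α := fun _ => S) v a) = List.ofFn v ++ [a] := by
  rw [List.ofFn_succ_last]; simp

def initLastEquiv (j : ℕ) : (Fin (j + 1) → S) × S ≃ (Fin j → S) × S × S where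
  toFun x := (Fin.init x.1, x.1 (Fin.last j), x.2)
  invFun x := (Fin.snoc x.1 x.2.1, x.2.2)
  left_inv := by rintro ⟨f, y⟩; simp
  right_inv := by rintro ⟨v, a, y⟩; simp

variable [MeasurableSpace S] {μ ν : Measure (ℤ → S)}

/-- The `ℓ¹` distance between the laws of the words of length `j + 2` under `μ` and `ν`; the last
two letters are split off because they determine the law of the next one. -/
noncomputable def blockDist (μ ν : Measure (ℤ → S)) (j : ℕ) : ℝ≥0∞ :=
  ∑' x : (Fin j → S) × S × S, absDiff (μ (cyl (proc S) 0 (List.ofFn x.1 ++ [x.2.1, x.2.2])))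
    (ν (cyl (proc S) 0 (List.ofFn x.1 ++ [x.2.1, x.2.2])))

lemma blockDist_zero : blockDist μ ν 0 = l1Dist (pairLaw μ) (pairLaw ν) := by
  rw [blockDist, ← (Equiv.uniqueProd (S × S) (Fin 0 → S)).symm.tsum_eq]
  simp [l1Dist, pairLaw]

variable [MeasurableSingletonClass S] [Countable S] {K₁ K₂ : S × S → S → ℝ≥0∞}

lemma blockDist_succ_le (h₁ : HasPairKernel μ K₁) (h₂ : HasPairKernel ν K₂)
    (hK₂ : ∀ p, ∑' c, K₂ p c = 1) (j : ℕ) :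
    blockDist μ ν (j + 1) ≤ blockDist μ ν j + ∑' p, pairLaw μ p * l1Dist (K₁ p) (K₂ p) := by
  set P := fun x : (Fin j → S) × S × S => μ (cyl (proc S) 0 (List.ofFn x.1 ++ [x.2.1, x.2.2]))
  set Q := fun x : (Fin j → S) × S × S => ν (cyl (proc S) 0 (List.ofFn x.1 ++ [x.2.1, x.2.2]))
  let e := ((initLastEquiv (S := S) j).symm.prodCongr (Equiv.refl S)).trans (Equiv.prodAssoc _ _ _)
  calc blockDist μ ν (j + 1)
      = ∑' x, ∑' y, absDiff (P x * K₁ x.2 y) (Q x * K₂ x.2 y) := by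
        rw [blockDist, ← e.tsum_eq, ENNReal.tsum_prod']
        refine tsum_congr fun ⟨v, a, b⟩ => tsum_congr fun y => ?_
        have hw : List.ofFn (Fin.snoc (α := fun _ => S) v a) ++ [b, y] =
            List.ofFn v ++ [a, b] ++ [y] := by rw [ofFn_snoc]; simp
        simp only [e, initLastEquiv, Equiv.trans_apply, Equiv.prodCongr_apply, Prod.map,
          Equiv.coe_fn_symm_mk, Equiv.refl_apply, Equiv.prodAssoc_apply, hw, P, Q]
        rw [h₁, h₂]
    _ ≤ ∑' x, (absDiff (P x) (Q x) + P x * l1Dist (K₁ x.2) (K₂ x.2)) := by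
        refine ENNReal.tsum_le_tsum fun x => ?_
        calc ∑' y, absDiff (P x * K₁ x.2 y) (Q x * K₂ x.2 y)
            ≤ ∑' y, (absDiff (P x) (Q x) * K₂ x.2 y + P x * absDiff (K₁ x.2 y) (K₂ x.2 y)) :=
              ENNReal.tsum_le_tsum fun y => absDiff_mul_le _ _ _ _
          _ = absDiff (P x) (Q x) + P x * l1Dist (K₁ x.2) (K₂ x.2) := by
              rw [ENNReal.tsum_add, ENNReal.tsum_mul_left, ENNReal.tsum_mul_left, hK₂, mul_one,
                l1Dist]
    _ = blockDist μ ν j + ∑' p, pairLaw μ p * l1Dist (K₁ p) (K₂ p) := by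
        rw [ENNReal.tsum_add]
        congr 1
        rw [ENNReal.tsum_prod', ENNReal.tsum_comm]
        refine tsum_congr fun p => ?_
        exact ENNReal.tsum_mul_right.trans
          (congrArg (· * l1Dist (K₁ p) (K₂ p)) (tsum_measure_cyl_ofFn_append [p.1, p.2] j))

lemma blockDist_le (h₁ : HasPairKernel μ K₁) (h₂ : HasPairKernel ν K₂)
    (hK₂ : ∀ p, ∑' c, K₂ p c = 1) (j : ℕ) :
    blockDist μ ν j ≤
      l1Dist (pairLaw μ) (pairLaw ν) + j * ∑' p, pairLaw μ p * l1Dist (K₁ p) (K₂ p) := by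
  induction j with
  | zero => simp [blockDist_zero]
  | succ j ih =>
    calc blockDist μ ν (j + 1)
        ≤ blockDist μ ν j + ∑' p, pairLaw μ p * l1Dist (K₁ p) (K₂ p) :=
          blockDist_succ_le h₁ h₂ hK₂ j
      _ ≤ _ := by push_cast; rw [add_mul, one_mul, ← add_assoc]; gcongr

lemma tsum_absDiff_le_blockDist (hμ : MeasurePreserving (shift S) μ μ)
    (hν : MeasurePreserving (shift S) ν ν) (j : ℕ) :
    ∑' f : Fin (j + 1) → S, absDiff (μ (cyl (proc S) 0 (List.ofFn f)))
      (ν (cyl (proc S) 0 (List.ofFn f))) ≤ blockDist μ ν j := by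
  calc ∑' f : Fin (j + 1) → S, absDiff (μ (cyl (proc S) 0 (List.ofFn f)))
        (ν (cyl (proc S) 0 (List.ofFn f)))
      ≤ ∑' (f : Fin (j + 1) → S) (y : S), absDiff (μ (cyl (proc S) 0 (List.ofFn f ++ [y])))
          (ν (cyl (proc S) 0 (List.ofFn f ++ [y]))) := by
        refine ENNReal.tsum_le_tsum fun f => ?_
        rw [measure_cyl_eq_tsum_append hμ, measure_cyl_eq_tsum_append hν]
        exact absDiff_tsum_le _ _
    _ = blockDist μ ν j := by
        rw [blockDist, ← (initLastEquiv j).tsum_eq, ENNReal.tsum_prod']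
        refine tsum_congr fun f => tsum_congr fun y => ?_
        have hw : List.ofFn (Fin.init f) ++ [f (Fin.last j), y] = List.ofFn f ++ [y] := by
          rw [List.ofFn_succ_last (f := f)]; simp; rfl
        simp only [initLastEquiv, Equiv.coe_fn_mk, hw]

lemma absDiff_map_coords_le_blockDist (hμ : MeasurePreserving (shift S) μ μ)
    (hν : MeasurePreserving (shift S) ν ν) (N : ℕ) (A : Set (Fin (N + 1) → S)) :
    absDiff (μ.map (fun ω (m : Fin (N + 1)) => ω ((m : ℕ) : ℤ)) A)
      (ν.map (fun ω (m : Fin (N + 1)) => ω ((m : ℕ) : ℤ)) A) ≤ blockDist μ ν N := by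
  have hF : Measurable fun ω : ℤ → S => fun m : Fin (N + 1) => ω ((m : ℕ) : ℤ) :=
    measurable_pi_lambda _ fun m => measurable_pi_apply _
  refine (absDiff_measure_le_l1Dist _ _ A).trans
    (le_of_eq_of_le (tsum_congr fun f => ?_) (tsum_absDiff_le_blockDist hμ hν N))
  dsimp only
  rw [Measure.map_apply hF (measurableSet_singleton f),
    Measure.map_apply hF (measurableSet_singleton f), preimage_coords_singleton,
    measure_cyl_of_measurePreserving hμ, measure_cyl_of_measurePreserving hν]

theorem blockDist_le_mul_pairLaw [IsProbabilityMeasure μ] [IsProbabilityMeasure ν]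
    (h₁ : HasPairKernel μ K₁) (h₂ : HasPairKernel ν K₂) (hK₁ : ∀ p, ∑' c, K₁ p c = 1)
    (hK₂ : ∀ p, ∑' c, K₂ p c = 1) {s₀ : S} (hmin : ∀ p, 4⁻¹ ≤ K₂ p s₀) {star : S × S}
    (hagree : ∀ p ≠ star, K₁ p = K₂ p) (N : ℕ) :
    blockDist μ ν N ≤ (64 + 2 * N) * pairLaw μ star := by
  set W := ∑' p, pairLaw μ p * l1Dist (K₁ p) (K₂ p)
  have hW : W ≤ 2 * pairLaw μ star := tsum_mul_l1Dist_le hK₁ hK₂ hagree _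
  have hd : l1Dist (pairLaw μ) (pairLaw ν) ≤ 32 * W := by
    have h := sq_mul_l1Dist_le_of_pairStep_eq hK₂ hmin (pairStep_pairLaw h₁)
      (pairStep_pairLaw h₂) (by rw [tsum_pairLaw, tsum_pairLaw])
      (by rw [tsum_pairLaw]; exact ENNReal.one_ne_top)
    calc l1Dist (pairLaw μ) (pairLaw ν)
        = 16 * ((4⁻¹) ^ 2 * l1Dist (pairLaw μ) (pairLaw ν)) := by
          rw [← mul_assoc, ← ENNReal.inv_pow, show (4 : ℝ≥0∞) ^ 2 = 16 by norm_num,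
            ENNReal.mul_inv_cancel (by norm_num) (by norm_num), one_mul]
      _ ≤ 16 * (2 * W) := by gcongr
      _ = 32 * W := by rw [← mul_assoc]; norm_num
  calc blockDist μ ν N ≤ l1Dist (pairLaw μ) (pairLaw ν) + N * W := blockDist_le h₁ h₂ hK₂ N
    _ ≤ 32 * W + N * W := by gcongr
    _ = (32 + N) * W := by ring
    _ ≤ (32 + N) * (2 * pairLaw μ star) := by gcongr
    _ = (64 + 2 * N) * pairLaw μ star := by ring

end Blocks

section Ptrans

lemma Ptrans_of_lt {s j : ℕ} (h : s < j) : Ptrans s j = (1 / 2) ^ (j - s + 1) := by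
  rw [Ptrans, if_pos h, one_div, inv_pow, ← zpow_natCast, ← zpow_neg]
  push_cast [h.le]
  ring_nf

lemma Ptrans_self (s : ℕ) : Ptrans s s = (1 / 2) ^ (s + 1) := by
  rw [Ptrans, if_neg (lt_irrefl s), if_pos rfl, one_div, inv_pow, ← zpow_natCast, ← zpow_neg]
  push_cast
  ring_nf

lemma Ptrans_of_gt {s j : ℕ} (h : j < s) : Ptrans s j = (1 / 2) ^ (j + 2) := by
  rw [Ptrans, if_neg (by omega), if_neg h.ne, one_div, inv_pow, ← zpow_natCast, ← zpow_neg]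
  push_cast
  ring_nf

lemma hasSum_Ptrans (s : ℕ) : HasSum (Ptrans s) 1 := by
  have hhead : ∑ i ∈ Finset.range (s + 1), Ptrans s i = 1 / 2 := by
    rw [Finset.sum_range_succ, Ptrans_self,
      Finset.sum_congr rfl fun i hi => Ptrans_of_gt (Finset.mem_range.1 hi)]
    induction s with
    | zero => norm_num
    | succ s ih =>
      have h : ((1 : ℝ) / 2) ^ (s + 1 + 1) = (1 / 2) ^ (s + 1) / 2 := by ring
      rw [Finset.sum_range_succ]
      linarith
  have htail : HasSum (fun n => Ptrans s (n + (s + 1))) (1 / 2) := by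
    have heq : (fun n => Ptrans s (n + (s + 1))) = fun n => 1 / 4 * (1 / 2) ^ n := by
      funext n
      rw [Ptrans_of_lt (by omega), show n + (s + 1) - s + 1 = n + 2 by omega]
      ring
    have h := hasSum_geometric_two.mul_left (1 / 4 : ℝ)
    rw [heq]
    rwa [show (1 / 4 : ℝ) * 2 = 1 / 2 by norm_num] at h
  exact (hasSum_nat_add_iff' (s + 1)).1 (by rw [hhead]; norm_num; exact htail)

lemma Ptrans_swap_apply (b u : ℕ) :
    Ptrans b (Equiv.swap b (b + 1) u) =
      if u = b then Ptrans b (b + 1) else if u = b + 1 then Ptrans b b else Ptrans b u := by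
  split_ifs with h₁ h₂
  · rw [h₁, Equiv.swap_apply_left]
  · rw [h₂, Equiv.swap_apply_right]
  · rw [Equiv.swap_apply_of_ne_of_ne h₁ h₂]

lemma Ptrans_nonneg (s j : ℕ) : 0 ≤ Ptrans s j := by
  unfold Ptrans; split_ifs <;> positivity

lemma quarter_le_Ptrans_zero (b : ℕ) : 1 / 4 ≤ Ptrans b 0 := by
  rcases Nat.eq_zero_or_pos b with rfl | hb
  · rw [Ptrans_self]; norm_num
  · rw [Ptrans_of_gt hb]; norm_num

/-- The kernel of the perturbed chains: after a history `(a, b)` with `T a b`, the entries `b` and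
`b + 1` of row `b` of `Ptrans` are exchanged. -/
noncomputable def swappedPtrans (T : ℕ → ℕ → Prop) (p : ℕ × ℕ) (u : ℕ) : ℝ≥0∞ :=
  ENNReal.ofReal (if T p.1 p.2 then Ptrans p.2 (Equiv.swap p.2 (p.2 + 1) u) else Ptrans p.2 u)

lemma tsum_swappedPtrans (T : ℕ → ℕ → Prop) (p : ℕ × ℕ) : ∑' u, swappedPtrans T p u = 1 := by
  have h : HasSum (fun u => if T p.1 p.2 then Ptrans p.2 (Equiv.swap p.2 (p.2 + 1) u)
      else Ptrans p.2 u) 1 := by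
    split_ifs
    · exact (Equiv.hasSum_iff (f := Ptrans p.2) (Equiv.swap p.2 (p.2 + 1))).2 (hasSum_Ptrans p.2)
    · exact hasSum_Ptrans p.2
  simp only [swappedPtrans]
  rw [← ENNReal.ofReal_tsum_of_nonneg (fun u => by split_ifs <;> exact Ptrans_nonneg _ _)
    h.summable, h.tsum_eq, ENNReal.ofReal_one]

lemma inv_four_le_swappedPtrans_zero (T : ℕ → ℕ → Prop) (p : ℕ × ℕ) :
    4⁻¹ ≤ swappedPtrans T p 0 := by
  have h : 1 / 4 ≤ if T p.1 p.2 then Ptrans p.2 (Equiv.swap p.2 (p.2 + 1) 0) else Ptrans p.2 0 := by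
    split_ifs
    · rcases Nat.eq_zero_or_pos p.2 with h₀ | h₀
      · rw [h₀, Equiv.swap_apply_left, Ptrans_of_lt (by norm_num)]; norm_num
      · rw [Equiv.swap_apply_of_ne_of_ne h₀.ne (by omega)]; exact quarter_le_Ptrans_zero _
    · exact quarter_le_Ptrans_zero _
  calc (4⁻¹ : ℝ≥0∞) = ENNReal.ofReal (1 / 4) := by
        rw [one_div, ENNReal.ofReal_inv_of_pos (by norm_num)]; norm_num
    _ ≤ swappedPtrans T p 0 := ENNReal.ofReal_le_ofReal h

lemma hasPairKernel_swappedPtrans {μ : Measure (ℤ → ℕ)} [IsFiniteMeasure μ]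
    (hμ : MeasurePreserving (shift ℕ) μ μ) (hmk : MarkovOfOrder μ 2) {T : ℕ → ℕ → Prop}
    [DecidableRel T]
    (htr : ∀ a b u, 0 < wordProb μ (proc ℕ) [a, b] → condProb μ (proc ℕ) u [a, b] =
      if T a b then
        (if u = b then Ptrans b (b + 1) else if u = b + 1 then Ptrans b b else Ptrans b u)
      else Ptrans b u) :
    HasPairKernel μ (swappedPtrans T) :=
  hasPairKernel_of_condProb hμ hmk (tsum_swappedPtrans T) fun a b u h => by
    rw [htr a b u h, swappedPtrans,
      ENNReal.toReal_ofReal (by split_ifs <;> exact Ptrans_nonneg _ _), Ptrans_swap_apply]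
    split_ifs <;> rfl

lemma swappedPtrans_congr {T T' : ℕ → ℕ → Prop} {p : ℕ × ℕ} (h : T p.1 p.2 ↔ T' p.1 p.2) :
    swappedPtrans T p = swappedPtrans T' p := by
  funext u
  exact congrArg ENNReal.ofReal (if_congr h rfl rfl)

lemma swappedPtrans_exists_le_eq_succ (t : ℕ → ℕ) (k : ℕ) {p : ℕ × ℕ}
    (hp : p ≠ (t (k + 1), k + 1)) :
    swappedPtrans (fun a b => ∃ j ≤ k, a = t j ∧ b = j) p =
      swappedPtrans (fun a b => ∃ j ≤ k + 1, a = t j ∧ b = j) p := by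
  refine swappedPtrans_congr ⟨fun ⟨j, hj, ha, hb⟩ => ⟨j, by omega, ha, hb⟩,
    fun ⟨j, hj, ha, hb⟩ => ⟨j, ?_, ha, hb⟩⟩
  rcases hj.lt_or_eq with hj | rfl
  · omega
  · exact absurd (Prod.ext ha hb) hp

end Ptrans

theorem perturbed_chain_tv_close_general
    (t : ℕ → ℕ) (k N : ℕ) (δ : ℝ)
    (μ ν : Measure (ℤ → ℕ)) [IsProbabilityMeasure μ] [IsProbabilityMeasure ν]
    (hergμ : Ergodic (shift ℕ) μ) (hergν : Ergodic (shift ℕ) ν)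
    (hmkμ : MarkovOfOrder μ 2) (hmkν : MarkovOfOrder ν 2)
    (htransμ : ∀ a b u : ℕ, 0 < wordProb μ (proc ℕ) [a, b] →
      condProb μ (proc ℕ) u [a, b] =
        if ∃ j ≤ k, a = t j ∧ b = j then
          (if u = b then Ptrans b (b + 1) else if u = b + 1 then Ptrans b b else Ptrans b u)
        else Ptrans b u)
    (htransν : ∀ a b u : ℕ, 0 < wordProb ν (proc ℕ) [a, b] →
      condProb ν (proc ℕ) u [a, b] =
        if ∃ j ≤ k + 1, a = t j ∧ b = j then
          (if u = b then Ptrans b (b + 1) else if u = b + 1 then Ptrans b b else Ptrans b u)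
        else Ptrans b u)
    (hsmall : (μ {ω | ω 0 = t (k + 1)}).toReal < δ / (64 + 2 * N)) :
    ∀ A : Set (Fin (N + 1) → ℕ), MeasurableSet A →
      |(μ.map (fun ω (m : Fin (N + 1)) => ω ((m : ℕ) : ℤ)) A).toReal -
          (ν.map (fun ω (m : Fin (N + 1)) => ω ((m : ℕ) : ℤ)) A).toReal| ≤ δ := by
  intro A _
  have hμ := hergμ.toMeasurePreserving
  have hν := hergν.toMeasurePreserving
  have key : absDiff (μ.map (fun ω (m : Fin (N + 1)) => ω ((m : ℕ) : ℤ)) A)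
      (ν.map (fun ω (m : Fin (N + 1)) => ω ((m : ℕ) : ℤ)) A) ≤
        (64 + 2 * N) * μ {ω | ω 0 = t (k + 1)} :=
    calc _ ≤ blockDist μ ν N := absDiff_map_coords_le_blockDist hμ hν N A
      _ ≤ (64 + 2 * N) * pairLaw μ (t (k + 1), k + 1) :=
        blockDist_le_mul_pairLaw (hasPairKernel_swappedPtrans hμ hmkμ htransμ)
          (hasPairKernel_swappedPtrans hν hmkν htransν) (tsum_swappedPtrans _)
          (tsum_swappedPtrans _) (inv_four_le_swappedPtrans_zero _)
          (fun p hp => swappedPtrans_exists_le_eq_succ t k hp) N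
      _ ≤ _ := by gcongr; exact pairLaw_le_measure hμ _ _
  calc _ ≤ (absDiff _ _).toReal :=
        abs_toReal_sub_toReal_le (measure_ne_top _ _) (measure_ne_top _ _)
    _ ≤ ((64 + 2 * N) * μ {ω | ω 0 = t (k + 1)}).toReal :=
        ENNReal.toReal_mono (by finiteness) key
    _ = (64 + 2 * N) * (μ {ω | ω 0 = t (k + 1)}).toReal := by
        rw [ENNReal.toReal_mul]; norm_cast
    _ ≤ δ := by
        have := (lt_div_iff₀' (by positivity)).1 hsmall
        linarith

/-- if `t_{k+1}` is so large that the stationary probability of the state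
`t_{k+1}` under `Y^{(k)}` is below `δ/(64+2N)`, then the laws of
`(Y^{(k)}_0,…,Y^{(k)}_N)` and `(Y^{(k+1)}_0,…,Y^{(k+1)}_N)` are within total variation
distance `δ`. -/
theorem perturbed_chain_tv_close
    (t : ℕ → ℕ) (k N : ℕ) (δ : ℝ) (hδ : 0 < δ)
    (μ ν : Measure (ℤ → ℕ)) [IsProbabilityMeasure μ] [IsProbabilityMeasure ν]
    (hergμ : Ergodic (shift ℕ) μ) (hergν : Ergodic (shift ℕ) ν)
    (hmkμ : MarkovOfOrder μ 2) (hmkν : MarkovOfOrder ν 2)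
    (htransμ : ∀ a b u : ℕ, 0 < wordProb μ (proc ℕ) [a, b] →
      condProb μ (proc ℕ) u [a, b] =
        if ∃ j ≤ k, a = t j ∧ b = j then
          (if u = b then Ptrans b (b + 1) else if u = b + 1 then Ptrans b b else Ptrans b u)
        else Ptrans b u)
    (htransν : ∀ a b u : ℕ, 0 < wordProb ν (proc ℕ) [a, b] →
      condProb ν (proc ℕ) u [a, b] =
        if ∃ j ≤ k + 1, a = t j ∧ b = j then
          (if u = b then Ptrans b (b + 1) else if u = b + 1 then Ptrans b b else Ptrans b u)
        else Ptrans b u)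
    (hsmall : (μ {ω | ω 0 = t (k + 1)}).toReal < δ / (64 + 2 * N)) :
    ∀ A : Set (Fin (N + 1) → ℕ), MeasurableSet A →
      |(μ.map (fun ω (m : Fin (N + 1)) => ω ((m : ℕ) : ℤ)) A).toReal -
          (ν.map (fun ω (m : Fin (N + 1)) => ω ((m : ℕ) : ℤ)) A).toReal| ≤ δ :=
  perturbed_chain_tv_close_general t k N δ μ ν hergμ hergν hmkμ hmkν htransμ htransν hsmall

end MemoryEst
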